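/- arXiv:1005.1042 — 3 statements merged into one kernel-verified Lean document; each statement's English description precedes it below -/
import Mathlib

section
/- For the polynomial f = x² + u y² + 2 v y z + w z² + (u w − v²) t² in variables x,y,z,w,u,v,t, the 4×4 matrices Ψ = xI + Ξ and Φ = xI − Ξ, where Ξ is the matrix [[−vt, y, z, t], [−uy−2vz, vt, −ut, z], [−wz, wt, −vt, −y], [−uwt, −wz, uy+2vz, vt]], satisfy ΨΦ = ΦΨ = f·I. -/
open MvPolynomial

noncomputable section

abbrev S0 : Type := MvPolynomial (Fin 7) ℂ

-- variables: x, y, z, w, u, v, t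
def x0 : S0 := X 0
def y0 : S0 := X 1
def z0 : S0 := X 2
def w0 : S0 := X 3
def u0 : S0 := X 4
def v0 : S0 := X 5
def t0 : S0 := X 6

def f0 : S0 := x0^2 + u0*y0^2 + 2*v0*y0*z0 + w0*z0^2 + (u0*w0 - v0^2)*t0^2

def Xi0 : Matrix (Fin 4) (Fin 4) S0 :=
  !![-v0*t0, y0, z0, t0;
     -u0*y0 - 2*v0*z0, v0*t0, -u0*t0, z0;
     -w0*z0, w0*t0, -v0*t0, -y0;
     -u0*w0*t0, -w0*z0, u0*y0 + 2*v0*z0, v0*t0]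

def Psi0 : Matrix (Fin 4) (Fin 4) S0 := x0 • (1 : Matrix (Fin 4) (Fin 4) S0) + Xi0
def Phi0 : Matrix (Fin 4) (Fin 4) S0 := x0 • (1 : Matrix (Fin 4) (Fin 4) S0) - Xi0

/-! Ξ squares to the scalar matrix `-q`, where `f = x² + q` (`q = flopQuadForm`). Since
`x • 1` is central, `(x • 1 + Ξ)(x • 1 - Ξ) = x² • 1 - Ξ² = f • 1`, and likewise in the
other order. -/

namespace Matrix

variable {n R : Type*} [Fintype n] [DecidableEq n] [CommRing R]

theorem scalar_add_mul_scalar_sub_of_mul_self {c f : R} {Ξ : Matrix n n R}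
    (h : Ξ * Ξ = (c ^ 2 - f) • 1) :
    (c • 1 + Ξ) * (c • 1 - Ξ) = f • 1 ∧ (c • 1 - Ξ) * (c • 1 + Ξ) = f • 1 := by
  have hc : Commute (c • 1 : Matrix n n R) Ξ := (Commute.one_left Ξ).smul_left c
  have hsq : (c • 1 : Matrix n n R) * (c • 1) = (c ^ 2) • 1 := by
    rw [smul_mul, one_mul, smul_smul, sq]
  refine ⟨?_, ?_⟩
  · rw [← hc.mul_self_sub_mul_self_eq, hsq, h, sub_smul, sub_sub_cancel]
  · rw [← hc.mul_self_sub_mul_self_eq', hsq, h, sub_smul, sub_sub_cancel]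

end Matrix

section UniversalFlop

variable {R : Type*} [CommRing R]

def flopQuadForm (y z w u v t : R) : R :=
  u * y ^ 2 + 2 * v * y * z + w * z ^ 2 + (u * w - v ^ 2) * t ^ 2

def flopXi (y z w u v t : R) : Matrix (Fin 4) (Fin 4) R :=
  !![-v * t, y, z, t;
     -u * y - 2 * v * z, v * t, -u * t, z;
     -w * z, w * t, -v * t, -y;
     -u * w * t, -w * z, u * y + 2 * v * z, v * t]

theorem flopXi_mul_self (y z w u v t : R) :
    flopXi y z w u v t * flopXi y z w u v t = -flopQuadForm y z w u v t • 1 := by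
  ext i j
  fin_cases i <;> fin_cases j <;>
    simp [flopXi, flopQuadForm, Matrix.mul_apply, Fin.sum_univ_four] <;> ring

end UniversalFlop

theorem universal_flop_matrix_factorization :
    Psi0 * Phi0 = f0 • (1 : Matrix (Fin 4) (Fin 4) S0) ∧
    Phi0 * Psi0 = f0 • (1 : Matrix (Fin 4) (Fin 4) S0) := by
  have hq : x0 ^ 2 - f0 = -flopQuadForm y0 z0 w0 u0 v0 t0 := by
    rw [f0, flopQuadForm]; ring
  have hXi : Xi0 * Xi0 = (x0 ^ 2 - f0) • 1 := by
    rw [hq, ← flopXi_mul_self]; rfl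
  exact Matrix.scalar_add_mul_scalar_sub_of_mul_self hXi

end
end

section
/- For the Morrison–Pinkham polynomial f = x² + y³ + wz² + w³y − λwy² − λw⁴ in ℂ[w,x,y,z] (λ ∈ ℂ a parameter), the 4×4 matrices Ψ = [[x, y, z, −w], [−(y−λw)y, x, (y−λw)w, z], [−wz, −w², x, −y], [(y−λw)w², −wz, (y−λw)y, x]] and Φ = [[x, −y, −z, w], [(y−λw)y, x, −(y−λw)w, −z], [wz, w², x, y], [−(y−λw)w², wz, −(y−λw)y, x]] satisfy ΨΦ = ΦΨ = f·I₄. -/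
/-!
Both matrices are `x • 1 ± A` for one matrix `A` with zero diagonal, so both products equal
`x² • 1 - A * A`, and it remains to see that `A * A = (x² - f) • 1`. With `u = y - λw`,
`J = !![0, 1; -u, 0]` (so `J² = -u`) and `2 × 2` blocks, `A = !![yJ, z - wJ; -w(z + wJ), -yJ]`
is a traceless `2 × 2` matrix over the commutative ring generated by `J`; its square is therefore
the scalar `y²J² - w(z² - w²J²) = -(uy² + wz² + uw³) = x² - f`.
-/

open MvPolynomial

noncomputable section

abbrev S4 : Type := MvPolynomial (Fin 4) ℂ

def w4 : S4 := X 0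
def x4 : S4 := X 1
def y4 : S4 := X 2
def z4 : S4 := X 3

def fMP (l : ℂ) : S4 :=
  x4^2 + y4^3 + w4*z4^2 + w4^3*y4 - C l * w4 * y4^2 - C l * w4^4

def PsiMP (l : ℂ) : Matrix (Fin 4) (Fin 4) S4 :=
  !![x4, y4, z4, -w4;
     -(y4 - C l * w4)*y4, x4, (y4 - C l * w4)*w4, z4;
     -w4*z4, -w4^2, x4, -y4;
     (y4 - C l * w4)*w4^2, -w4*z4, (y4 - C l * w4)*y4, x4]

def PhiMP (l : ℂ) : Matrix (Fin 4) (Fin 4) S4 :=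
  !![x4, -y4, -z4, w4;
     (y4 - C l * w4)*y4, x4, -(y4 - C l * w4)*w4, -z4;
     w4*z4, w4^2, x4, y4;
     -(y4 - C l * w4)*w4^2, w4*z4, -(y4 - C l * w4)*y4, x4]

def offDiagMP (l : ℂ) : Matrix (Fin 4) (Fin 4) S4 :=
  !![0, y4, z4, -w4;
     -(y4 - C l * w4)*y4, 0, (y4 - C l * w4)*w4, z4;
     -w4*z4, -w4^2, 0, -y4;
     (y4 - C l * w4)*w4^2, -w4*z4, (y4 - C l * w4)*y4, 0]

section

variable (l : ℂ)

theorem PsiMP_eq_smul_one_add : PsiMP l = x4 • (1 : Matrix (Fin 4) (Fin 4) S4) + offDiagMP l := by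
  ext i j : 1
  fin_cases i <;> fin_cases j <;> simp [PsiMP, offDiagMP]

theorem PhiMP_eq_smul_one_sub : PhiMP l = x4 • (1 : Matrix (Fin 4) (Fin 4) S4) - offDiagMP l := by
  ext i j : 1
  fin_cases i <;> fin_cases j <;> simp [PhiMP, offDiagMP] <;> ring

theorem offDiagMP_mul_self :
    offDiagMP l * offDiagMP l = (x4 ^ 2 - fMP l) • (1 : Matrix (Fin 4) (Fin 4) S4) := by
  ext i j : 1
  fin_cases i <;> fin_cases j <;>
    simp [offDiagMP, fMP, Matrix.mul_apply, Fin.sum_univ_four] <;> ring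

end

theorem morrison_pinkham_matrix_factorization (l : ℂ) :
    PsiMP l * PhiMP l = fMP l • (1 : Matrix (Fin 4) (Fin 4) S4) ∧
    PhiMP l * PsiMP l = fMP l • (1 : Matrix (Fin 4) (Fin 4) S4) := by
  set s : Matrix (Fin 4) (Fin 4) S4 := x4 • 1
  have hcomm : Commute s (offDiagMP l) := (Commute.one_left _).smul_left x4
  have hf : fMP l • (1 : Matrix (Fin 4) (Fin 4) S4) = s * s - offDiagMP l * offDiagMP l := by
    rw [offDiagMP_mul_self, smul_mul_smul_comm, one_mul, ← sub_smul]
    ring_nf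
  rw [PsiMP_eq_smul_one_add, PhiMP_eq_smul_one_sub, hf]
  exact ⟨hcomm.mul_self_sub_mul_self_eq.symm, hcomm.mul_self_sub_mul_self_eq'.symm⟩

end
end

section
/- Let S be a commutative ring, f ∈ S a nonzerodivisor, and (Ψ, Φ) a matrix factorization of f (ΨΦ = ΦΨ = f·Iₙ over S). Then the 2-periodic complex of R = S/(f)-modules ⋯ → Rⁿ →^Ψ̄ Rⁿ →^Φ̄ Rⁿ →^Ψ̄ Rⁿ is exact at the middle term: ker(Φ̄) = im(Ψ̄), provided S has no zero divisors and f ≠ 0. (Eisenbud's periodicity: matrix factorizations give 2-periodic exact resolutions of coker Ψ̄.) -/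
/-!
Since `Φ̄ Ψ̄ = f̄ · 1 = 0`, the image of `Ψ̄` lies in the kernel of `Φ̄`. Conversely, if `Φ̄ ū = 0`
for a lift `u` of `ū`, then `Φ u = f w` for some `w`, and `f u = Ψ Φ u = f Ψ w`; cancelling the
nonzerodivisor `f` gives `u = Ψ w`, so `ū = Ψ̄ w̄`.
-/

open Matrix

namespace Matrix

variable {S : Type*} [CommRing S] {ι : Type*} [Fintype ι] [DecidableEq ι]

theorem map_mul_map_eq_zero_of_mul_eq_smul_one {R : Type*} [CommRing R] (π : S →+* R) {f : S}
    (hπf : π f = 0) {Phi Psi : Matrix ι ι S} (h : Phi * Psi = f • 1) :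
    Phi.map π * Psi.map π = 0 := by
  rw [← Matrix.map_mul, h, map_smul' _ _ _ (map_mul π), hπf, zero_smul]

theorem eq_mulVec_of_mulVec_eq_smul {f : S} (hf : IsLeftRegular f) {Phi Psi : Matrix ι ι S}
    (h : Psi * Phi = f • 1) {u w : ι → S} (hw : Phi *ᵥ u = f • w) : u = Psi *ᵥ w := by
  have hfu : f • u = f • (Psi *ᵥ w) := by
    rw [← mulVec_smul, ← hw, mulVec_mulVec, h, smul_mulVec, one_mulVec]
  exact funext fun i => hf (congrFun hfu i)

theorem ker_le_range_map_quotient_of_mul_eq_smul_one {f : S} (hf : IsLeftRegular f)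
    {Phi Psi : Matrix ι ι S} (h : Psi * Phi = f • 1) :
    LinearMap.ker (Phi.map (Ideal.Quotient.mk (Ideal.span {f}))).mulVecLin ≤
      LinearMap.range (Psi.map (Ideal.Quotient.mk (Ideal.span {f}))).mulVecLin := by
  set π := Ideal.Quotient.mk (Ideal.span {f})
  intro v hv
  obtain ⟨u, rfl⟩ := Ideal.Quotient.mk_surjective.comp_left v
  have hdvd : ∀ i, f ∣ (Phi *ᵥ u) i := fun i => by
    rw [← Ideal.Quotient.eq_zero_iff_dvd, RingHom.map_mulVec]
    exact congrFun hv i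
  choose w hw using hdvd
  refine ⟨π ∘ w, funext fun i => ?_⟩
  rw [mulVecLin_apply, ← RingHom.map_mulVec, ← eq_mulVec_of_mulVec_eq_smul hf h (funext hw)]
  rfl

end Matrix

theorem matrix_factorization_exactness
    {S : Type*} [CommRing S] [IsDomain S] (f : S) (hf : f ≠ 0)
    (n : ℕ) (Psi Phi : Matrix (Fin n) (Fin n) S)
    (h1 : Psi * Phi = f • (1 : Matrix (Fin n) (Fin n) S))
    (h2 : Phi * Psi = f • (1 : Matrix (Fin n) (Fin n) S)) :
    let π := Ideal.Quotient.mk (Ideal.span {f})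
    LinearMap.ker ((Phi.map π).mulVecLin) = LinearMap.range ((Psi.map π).mulVecLin) := by
  intro π
  have hπf : π f = 0 := Ideal.Quotient.eq_zero_iff_dvd f f |>.mpr dvd_rfl
  refine le_antisymm (ker_le_range_map_quotient_of_mul_eq_smul_one (IsRegular.of_ne_zero hf).left h1)
    (LinearMap.range_le_ker_iff.mpr ?_)
  rw [← mulVecLin_mul, map_mul_map_eq_zero_of_mul_eq_smul_one π hπf h2, mulVecLin_zero]
end
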